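/- Let d ≥ 2 and m ≥ 1 be integers with (d−1) dividing (m+1), and set a = (m+1)/(d−1). Let p be a prime dividing d and t = ν_p(d). Let n ≥ 1 be an integer with m ≤ d^{n+1} − 3. If m = d − 2 or p does not divide m, then B(d,m,n) ≠ 0 and ν_p(B(d,m,n)) = −(ν_p(a!) + t·a). -/

import Mathlib

/-- Generalized binomial coefficient `C_j(x) = x(x-1)⋯(x-j+1)/j!`, with `C_0(x) = 1`. -/
noncomputable def genBinom (x : ℚ) (j : ℕ) : ℚ :=
  (∏ i ∈ Finset.range j, (x - (i : ℚ))) / (Nat.factorial j : ℚ)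

/-- The Ewing–Schober combinatorial formula `B(d,m,n)`: the sum is over all tuples
`(j_1,…,j_n)` of nonnegative integers (here `j : Fin n → ℕ`, 0-indexed, so `j k`
corresponds to `j_{k+1}`) satisfying `Σ_{k=1}^n (d^{n-k+1} - 1) j_k = m + 1`, of
`Π_{k=1}^n C_{j_k}(m/d^{n-k+1} - Σ_{l=1}^{k-1} d^{k-l} j_l)`, multiplied by `-(1/m)`. -/
noncomputable def multibrotB (d m n : ℕ) : ℚ :=
  -(1 / (m : ℚ)) * ∑ᶠ j : Fin n → ℕ,
    if (∑ k : Fin n, (d ^ (n - k.val) - 1) * j k) = m + 1 then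
      ∏ k : Fin n,
        genBinom ((m : ℚ) / (d : ℚ) ^ (n - k.val)
          - ∑ l ∈ Finset.univ.filter (fun l : Fin n => l < k),
              (d : ℚ) ^ (k.val - l.val) * ((j l : ℕ) : ℚ)) (j k)
    else 0

/-!
Write `e_k = n - k + 1` for the exponent of `d` in the `k`-th factor and `a = (m + 1)/(d - 1)`,
so that the admissible tuples are those with `Σ (d^{e_k} - 1) j_k = (d - 1) a`.  By Bernoulli,
`(d - 1) e ≤ d^e - 1` with equality only for `e = 1`; hence `Σ j_k ≤ Σ e_k j_k ≤ a`, with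
equality in the second step only for the tuple `j₀ = (0, …, 0, a)`.

If `p ∤ m`, each factor `x - i` of a binomial coefficient `C_{j_k}(x)` is an integer prime to `p`
divided by `d^{e_k}`, so a term has valuation `-ν_p(d) Σ e_k j_k - Σ ν_p(j_k!)`.  The term of `j₀`
has valuation `-ν_p(d) a - ν_p(a!)`, and every other term a strictly larger one (the factorial
part is bounded via `Π j_k! ∣ a!`), so it fixes the valuation of the sum, while `-1/m` is a
`p`-adic unit.  If `m = d - 2` then `a = 1`, `j₀` is the only admissible tuple and `B = -1/d`.
-/

open Finset Nat

section Valuation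

variable {p : ℕ} [Fact p.Prime]

lemma padicValRat_prod {ι : Type*} {s : Finset ι} {f : ι → ℚ} (hf : ∀ i ∈ s, f i ≠ 0) :
    padicValRat p (∏ i ∈ s, f i) = ∑ i ∈ s, padicValRat p (f i) := by
  classical
  induction s using Finset.induction_on with
  | empty => simp
  | insert i s hi ih =>
    have hs : ∀ j ∈ s, f j ≠ 0 := fun j hj => hf j (mem_insert_of_mem hj)
    rw [prod_insert hi, sum_insert hi,
      padicValRat.mul (hf i (mem_insert_self i s)) (prod_ne_zero_iff.2 hs), ih hs]

lemma lt_padicValRat_sum {ι : Type*} {s : Finset ι} {f : ι → ℚ} {v : ℤ}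
    (hf : ∀ i ∈ s, f i ≠ 0 → v < padicValRat p (f i)) (hs : ∑ i ∈ s, f i ≠ 0) :
    v < padicValRat p (∑ i ∈ s, f i) := by
  classical
  induction s using Finset.induction_on with
  | empty => simp at hs
  | insert i s hi ih =>
    have ih := ih fun j hj => hf j (mem_insert_of_mem hj)
    rw [sum_insert hi] at hs ⊢
    by_cases hi0 : f i = 0
    · rw [hi0, zero_add] at hs ⊢
      exact ih hs
    by_cases hs0 : ∑ j ∈ s, f j = 0
    · rw [hs0, add_zero]
      exact hf i (mem_insert_self i s) hi0
    exact (lt_min (hf i (mem_insert_self i s) hi0) (ih hs0)).trans_le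
      (padicValRat.min_le_padicValRat_add hs)

lemma sum_ne_zero_and_padicValRat_sum_eq_of_lt {ι : Type*} {s : Finset ι} {f : ι → ℚ} {i₀ : ι}
    (hi₀ : i₀ ∈ s) (hf : f i₀ ≠ 0)
    (hlt : ∀ i ∈ s, i ≠ i₀ → f i ≠ 0 → padicValRat p (f i₀) < padicValRat p (f i)) :
    ∑ i ∈ s, f i ≠ 0 ∧ padicValRat p (∑ i ∈ s, f i) = padicValRat p (f i₀) := by
  classical
  rw [← add_sum_erase s f hi₀]
  set r := ∑ i ∈ s.erase i₀, f i
  by_cases hr : r = 0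
  · simp [hr, hf]
  have hrlt : padicValRat p (f i₀) < padicValRat p r :=
    lt_padicValRat_sum (fun i hi => hlt i (mem_of_mem_erase hi) (ne_of_mem_erase hi)) hr
  have hsum : f i₀ + r ≠ 0 := by
    intro h
    rw [eq_neg_of_add_eq_zero_right h, padicValRat.neg] at hrlt
    exact hrlt.false
  exact ⟨hsum, padicValRat.add_eq_of_lt hsum hf hr hrlt⟩

lemma sum_padicValNat_factorial_le {ι : Type*} {s : Finset ι} {f : ι → ℕ} {a : ℕ}
    (h : ∑ i ∈ s, f i ≤ a) : ∑ i ∈ s, padicValNat p (f i)! ≤ padicValNat p a ! := by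
  have hdvd : ∏ i ∈ s, (f i)! ∣ a ! :=
    (prod_factorial_dvd_factorial_sum s f).trans (factorial_dvd_factorial h)
  have hle := (factorization_le_iff_dvd (prod_ne_zero_iff.2 fun i _ => factorial_ne_zero _)
    (factorial_ne_zero a)).2 hdvd p
  rw [factorization_prod fun i _ => factorial_ne_zero _, Finsupp.finsetSum_apply] at hle
  simpa only [factorization_def _ Fact.out] using hle

lemma padicValRat_intCast_div_pow {z : ℤ} (hz : ¬ (p : ℤ) ∣ z) {d : ℕ} (hd : d ≠ 0) (e : ℕ) :
    padicValRat p (z / (d : ℚ) ^ e) = -(e * padicValNat p d) := by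
  have hz0 : (z : ℚ) ≠ 0 := Int.cast_ne_zero.2 fun h => hz (h ▸ dvd_zero _)
  rw [padicValRat.div hz0 (by positivity), padicValRat.pow, padicValRat.of_int,
    padicValInt.eq_zero_of_not_dvd hz, padicValRat.of_nat]
  ring

end Valuation

lemma sub_one_mul_le_pow_sub_one (d e : ℕ) : (d - 1) * e ≤ d ^ e - 1 := by
  rcases d with _ | c
  · simp
  have h := one_add_le_pow_of_two_add_nonneg (a := c) (by positivity) e
  rw [add_comm 1 c, Nat.cast_id, mul_comm] at h
  rw [add_tsub_cancel_right]
  omega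

lemma sub_one_mul_lt_pow_sub_one {d e : ℕ} (hd : 2 ≤ d) (he : 2 ≤ e) :
    (d - 1) * e < d ^ e - 1 := by
  obtain ⟨c, rfl⟩ : ∃ c, d = c + 1 := ⟨d - 1, by omega⟩
  rw [add_tsub_cancel_right]
  induction e, he using Nat.le_induction with
  | base =>
    have h : (c + 1) ^ 2 = c * c + 2 * c + 1 := by ring
    have hc : 1 ≤ c * c := Nat.one_le_iff_ne_zero.2 (mul_ne_zero (by omega) (by omega))
    omega
  | succ e he ih =>
    have h : (c + 1) ^ (e + 1) = (c + 1) ^ e * c + (c + 1) ^ e := by ring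
    have hc : c ≤ (c + 1) ^ e * c := Nat.le_mul_of_pos_left c (by positivity)
    rw [Nat.mul_add_one]
    omega

lemma genBinom_ne_zero {x : ℚ} {j : ℕ} (hx : ∀ i < j, x ≠ i) : genBinom x j ≠ 0 :=
  div_ne_zero (prod_ne_zero_iff.2 fun i hi => sub_ne_zero.2 (hx i (mem_range.1 hi)))
    (by positivity)

lemma padicValRat_genBinom {p : ℕ} [Fact p.Prime] {x : ℚ} {j : ℕ} {c : ℤ}
    (hx : ∀ i < j, x ≠ i) (hc : ∀ i < j, padicValRat p (x - i) = c) :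
    padicValRat p (genBinom x j) = j * c - padicValNat p j ! := by
  have hne : ∀ i ∈ range j, x - i ≠ 0 := fun i hi => sub_ne_zero.2 (hx i (mem_range.1 hi))
  rw [genBinom, padicValRat.div (prod_ne_zero_iff.2 hne) (by positivity), padicValRat_prod hne,
    sum_congr rfl fun i hi => hc i (mem_range.1 hi), padicValRat.of_nat]
  simp

noncomputable def multibrotArg (d m n : ℕ) (j : Fin n → ℕ) (k : Fin n) : ℚ :=
  (m : ℚ) / (d : ℚ) ^ (n - k.val)
    - ∑ l ∈ Finset.univ.filter (fun l : Fin n => l < k), (d : ℚ) ^ (k.val - l.val) * ((j l : ℕ) : ℚ)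

noncomputable def multibrotTerm (d m n : ℕ) (j : Fin n → ℕ) : ℚ :=
  ∏ k, genBinom (multibrotArg d m n j k) (j k)

/-- The box `range (m + 2)` only makes the set finite: for `2 ≤ d` it cuts off no solution
(`mem_multibrotTuples`). -/
def multibrotTuples (d m n : ℕ) : Finset (Fin n → ℕ) :=
  {j ∈ Fintype.piFinset fun _ => range (m + 2) | ∑ k, (d ^ (n - k.val) - 1) * j k = m + 1}

def multibrotWeight (n : ℕ) (j : Fin n → ℕ) : ℕ :=
  ∑ k, (n - k.val) * j k

section Tuples

variable {d m n a : ℕ}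

lemma mem_multibrotTuples (hd : 2 ≤ d) {j : Fin n → ℕ} :
    j ∈ multibrotTuples d m n ↔ ∑ k, (d ^ (n - k.val) - 1) * j k = m + 1 := by
  simp only [multibrotTuples, mem_filter, Fintype.mem_piFinset, mem_range, and_iff_right_iff_imp]
  intro h k
  have hk : (d ^ (n - k.val) - 1) * j k ≤ m + 1 :=
    h ▸ single_le_sum (f := fun k => (d ^ (n - k.val) - 1) * j k) (fun _ _ => zero_le _)
      (mem_univ k)
  have hpow : d ≤ d ^ (n - k.val) := le_self_pow (by omega) d
  have : j k ≤ (d ^ (n - k.val) - 1) * j k := Nat.le_mul_of_pos_left _ (by omega)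
  omega

lemma multibrotB_eq_sum (hd : 2 ≤ d) :
    multibrotB d m n = -(1 / m) * ∑ j ∈ multibrotTuples d m n, multibrotTerm d m n j := by
  have hsupp : Function.support (fun j : Fin n → ℕ =>
      if ∑ k, (d ^ (n - k.val) - 1) * j k = m + 1 then multibrotTerm d m n j else 0) ⊆
      multibrotTuples d m n := fun j hj =>
    (mem_multibrotTuples hd).2 (not_imp_comm.1 (fun h => if_neg h) hj)
  exact congrArg _ ((finsum_eq_sum_of_support_subset _ hsupp).trans
    (sum_congr rfl fun j hj => if_pos ((mem_multibrotTuples hd).1 hj)))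

lemma multibrotWeight_single_last (a : ℕ) :
    multibrotWeight (n + 1) (Pi.single (Fin.last n) a) = a := by
  simp [multibrotWeight, Pi.single_apply]

lemma single_last_mem_multibrotTuples (hd : 2 ≤ d) (ha : (d - 1) * a = m + 1) :
    Pi.single (Fin.last n) a ∈ multibrotTuples d m (n + 1) := by
  rw [mem_multibrotTuples hd]
  simpa [Pi.single_apply] using ha

lemma sum_le_multibrotWeight (j : Fin n → ℕ) : ∑ k, j k ≤ multibrotWeight n j :=
  sum_le_sum fun k _ => Nat.le_mul_of_pos_left _ (by omega)

lemma multibrotWeight_lt (hd : 2 ≤ d) (ha : (d - 1) * a = m + 1) {j : Fin (n + 1) → ℕ}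
    (hj : j ∈ multibrotTuples d m (n + 1)) (hne : j ≠ Pi.single (Fin.last n) a) :
    multibrotWeight (n + 1) j < a := by
  rw [mem_multibrotTuples hd, ← ha] at hj
  obtain ⟨k₀, hk₀, hjk₀⟩ : ∃ k, k ≠ Fin.last n ∧ j k ≠ 0 := by
    by_contra! h
    have hsingle : j = Pi.single (Fin.last n) (j (Fin.last n)) := by
      funext k
      by_cases hk : k = Fin.last n
      · simp [hk]
      · simp [hk, h k hk]
    rw [hsingle] at hj hne
    simp [Pi.single_apply] at hj
    exact hne (by rw [hj.resolve_right (by omega)])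
  refine Nat.lt_of_mul_lt_mul_left (a := d - 1) (hj ▸ ?_)
  rw [multibrotWeight, mul_sum]
  refine sum_lt_sum (fun k _ => ?_) ⟨k₀, mem_univ _, ?_⟩
  · rw [← mul_assoc]
    exact Nat.mul_le_mul_right _ (sub_one_mul_le_pow_sub_one _ _)
  · have hk₀' : (k₀ : ℕ) < n := Fin.val_lt_last hk₀
    rw [← mul_assoc]
    exact Nat.mul_lt_mul_of_pos_right (sub_one_mul_lt_pow_sub_one hd (by omega)) (by omega)

end Tuples

section Terms

variable {p d m n : ℕ}

lemma exists_multibrotArg_sub_eq (hd : d ≠ 0) (hpd : p ∣ d) (hpm : ¬ p ∣ m) (j : Fin n → ℕ)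
    (k : Fin n) (i : ℕ) :
    ∃ z : ℤ, ¬ (p : ℤ) ∣ z ∧ multibrotArg d m n j k - i = z / (d : ℚ) ^ (n - k.val) := by
  set S : ℕ := ∑ l ∈ univ.filter (· < k), d ^ (k.val - l.val) * j l with hS
  refine ⟨m - d ^ (n - k.val) * (S + i), fun h => hpm ?_, ?_⟩
  · have hpow : (p : ℤ) ∣ d ^ (n - k.val) * (S + i) :=
      (dvd_pow (Int.natCast_dvd_natCast.2 hpd) (by have := k.isLt; omega)).mul_right _
    exact Int.natCast_dvd_natCast.1 (by simpa using dvd_add h hpow)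
  · rw [multibrotArg, hS]
    push_cast
    field_simp
    ring

lemma multibrotArg_ne_natCast (hd : d ≠ 0) (hpd : p ∣ d) (hpm : ¬ p ∣ m) (j : Fin n → ℕ)
    (k : Fin n) (i : ℕ) : multibrotArg d m n j k ≠ i := by
  obtain ⟨z, hz, heq⟩ := exists_multibrotArg_sub_eq hd hpd hpm j k i
  rw [← sub_ne_zero, heq]
  exact div_ne_zero (Int.cast_ne_zero.2 fun h => hz (h ▸ dvd_zero _)) (by positivity)

lemma multibrotTerm_ne_zero (hd : d ≠ 0) (hpd : p ∣ d) (hpm : ¬ p ∣ m) (j : Fin n → ℕ) :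
    multibrotTerm d m n j ≠ 0 :=
  prod_ne_zero_iff.2 fun k _ => genBinom_ne_zero fun i _ => multibrotArg_ne_natCast hd hpd hpm j k i

variable [Fact p.Prime]

lemma padicValRat_multibrotArg_sub (hd : d ≠ 0) (hpd : p ∣ d) (hpm : ¬ p ∣ m)
    (j : Fin n → ℕ) (k : Fin n) (i : ℕ) :
    padicValRat p (multibrotArg d m n j k - i) = -((n - k.val : ℕ) * padicValNat p d) := by
  obtain ⟨z, hz, heq⟩ := exists_multibrotArg_sub_eq hd hpd hpm j k i
  rw [heq, padicValRat_intCast_div_pow hz hd]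

lemma padicValRat_multibrotTerm (hd : d ≠ 0) (hpd : p ∣ d) (hpm : ¬ p ∣ m) (j : Fin n → ℕ) :
    padicValRat p (multibrotTerm d m n j) =
      -(padicValNat p d * multibrotWeight n j : ℕ) - ∑ k, padicValNat p (j k)! := by
  have hx := multibrotArg_ne_natCast hd hpd hpm j
  rw [multibrotTerm, padicValRat_prod fun k _ => genBinom_ne_zero fun i _ => hx k i,
    sum_congr rfl fun k _ => padicValRat_genBinom (fun i _ => hx k i)
      fun i _ => padicValRat_multibrotArg_sub hd hpd hpm j k i,
    multibrotWeight, sum_sub_distrib, mul_sum]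
  push_cast
  rw [← sum_neg_distrib]
  exact congrArg₂ _ (sum_congr rfl fun k _ => by ring) rfl

end Terms

lemma multibrotTerm_single_last (d m n a : ℕ) :
    multibrotTerm d m (n + 1) (Pi.single (Fin.last n) a) = genBinom (m / d) a := by
  rw [multibrotTerm, prod_eq_single (Fin.last n)]
  · simp [multibrotArg, Pi.single_apply]
  · intro k _ hk
    simp [hk, genBinom]
  · simp

lemma multibrotTuples_add_two (m n : ℕ) :
    multibrotTuples (m + 2) m (n + 1) = {Pi.single (Fin.last n) 1} := by
  have ha : (m + 2 - 1) * 1 = m + 1 := by omega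
  refine eq_singleton_iff_unique_mem.2 ⟨single_last_mem_multibrotTuples (by omega) ha,
    fun j hj => by_contra fun hne => ?_⟩
  have hzero : ∑ k, j k = 0 := by
    have := (sum_le_multibrotWeight j).trans_lt (multibrotWeight_lt (by omega) ha hj hne)
    omega
  rw [sum_eq_zero_iff] at hzero
  rw [mem_multibrotTuples (by omega)] at hj
  simp [hzero] at hj

lemma multibrotB_add_two {m : ℕ} (n : ℕ) (hm : m ≠ 0) :
    multibrotB (m + 2) m (n + 1) = -1 / (m + 2) := by
  rw [multibrotB_eq_sum (by omega), multibrotTuples_add_two, sum_singleton,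
    multibrotTerm_single_last]
  simp [genBinom]
  field_simp

theorem multibrotB_ne_zero_and_padicValRat_eq_of_not_dvd {p d m a : ℕ} [Fact p.Prime] (n : ℕ)
    (hd : 2 ≤ d) (ha : (d - 1) * a = m + 1) (hpd : p ∣ d) (hpm : ¬ p ∣ m) :
    multibrotB d m (n + 1) ≠ 0 ∧
      padicValRat p (multibrotB d m (n + 1)) = -(padicValNat p a ! + padicValNat p d * a : ℕ) := by
  set j₀ : Fin (n + 1) → ℕ := Pi.single (Fin.last n) a
  have hd0 : d ≠ 0 := by omega
  have hval := padicValRat_multibrotTerm (m := m) (n := n + 1) hd0 hpd hpm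
  have hj₀ : padicValRat p (multibrotTerm d m (n + 1) j₀) =
      -(padicValNat p d * a : ℕ) - padicValNat p a ! := by
    rw [hval, multibrotWeight_single_last,
      sum_eq_single (Fin.last n) (fun k _ hk => by simp [j₀, hk]) (by simp)]
    simp [j₀]
  have hdom : ∀ j ∈ multibrotTuples d m (n + 1), j ≠ j₀ → multibrotTerm d m (n + 1) j ≠ 0 →
      padicValRat p (multibrotTerm d m (n + 1) j₀) <
        padicValRat p (multibrotTerm d m (n + 1) j) := by
    intro j hj hne _
    have hw := multibrotWeight_lt hd ha hj hne
    have hfac := sum_padicValNat_factorial_le (p := p) ((sum_le_multibrotWeight j).trans hw.le)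
    have hlt := Nat.mul_lt_mul_of_pos_left hw (one_le_padicValNat_of_dvd hd0 hpd)
    rw [hj₀, hval]
    omega
  obtain ⟨hsum, hsumval⟩ := sum_ne_zero_and_padicValRat_sum_eq_of_lt
    (single_last_mem_multibrotTuples hd ha) (multibrotTerm_ne_zero hd0 hpd hpm j₀) hdom
  have hm : m ≠ 0 := fun h => hpm (h ▸ dvd_zero p)
  have hc : -(1 / (m : ℚ)) ≠ 0 := by simpa using hm
  rw [multibrotB_eq_sum hd]
  refine ⟨mul_ne_zero hc hsum, ?_⟩
  rw [padicValRat.mul hc hsum, hsumval, hj₀, padicValRat.neg, one_div, padicValRat.inv,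
    padicValRat.of_nat, padicValNat.eq_zero_of_not_dvd hpm]
  push_cast
  ring

theorem multibrotB_padicValRat_eq_general (d m n : ℕ) (hd : 2 ≤ d) (hm : 1 ≤ m) (hn : 1 ≤ n)
    (hdvd : (d - 1) ∣ (m + 1)) (a : ℕ) (ha : a = (m + 1) / (d - 1))
    (p : ℕ) (hp : p.Prime) (hpd : p ∣ d) (t : ℕ) (ht : t = padicValNat p d)
    (hcase : m = d - 2 ∨ ¬ p ∣ m) :
    multibrotB d m n ≠ 0 ∧
      padicValRat p (multibrotB d m n)
        = -((padicValNat p (Nat.factorial a) : ℤ) + (t : ℤ) * (a : ℤ)) := by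
  have := Fact.mk hp
  obtain ⟨n, rfl⟩ := Nat.exists_eq_add_of_le' hn
  have haa : (d - 1) * a = m + 1 := ha ▸ Nat.mul_div_cancel' hdvd
  subst ht
  rcases hcase with hmd | hpm
  · obtain rfl : d = m + 2 := by omega
    obtain rfl : a = 1 := Nat.eq_of_mul_eq_mul_left (by omega) (haa.trans (by omega))
    have hval : padicValRat p ((m : ℚ) + 2) = padicValNat p (m + 2) := by
      exact_mod_cast padicValRat.of_nat
    rw [multibrotB_add_two n (by omega)]
    refine ⟨by positivity, ?_⟩
    rw [neg_div, padicValRat.neg, padicValRat.div one_ne_zero (by positivity), hval]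
    simp
  · exact_mod_cast multibrotB_ne_zero_and_padicValRat_eq_of_not_dvd n hd haa hpd hpm

theorem multibrotB_padicValRat_eq (d m n : ℕ) (hd : 2 ≤ d) (hm : 1 ≤ m) (hn : 1 ≤ n)
    (hdvd : (d - 1) ∣ (m + 1)) (a : ℕ) (ha : a = (m + 1) / (d - 1))
    (p : ℕ) (hp : p.Prime) (hpd : p ∣ d) (t : ℕ) (ht : t = padicValNat p d)
    (hmn : m ≤ d ^ (n + 1) - 3)
    (hcase : m = d - 2 ∨ ¬ p ∣ m) :
    multibrotB d m n ≠ 0 ∧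
      padicValRat p (multibrotB d m n)
        = -((padicValNat p (Nat.factorial a) : ℤ) + (t : ℤ) * (a : ℤ)) :=
  multibrotB_padicValRat_eq_general d m n hd hm hn hdvd a ha p hp hpd t ht hcase
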